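/- Let n, m, l be natural numbers with n + m + l even, and set P₁ := n² + m² + l² − 2nm − 2nl − 2ml. Then I_{n,m,l,4} = (n+m−l−5)‼ · (n−m+l−5)‼ · (−n+m+l−5)‼ · P₄, where P₄ := P₁⁴ − 20·P₁³ + (−96·nml + 118)·P₁² + (960·nml − 180)·P₁ − 256·nml·(n³+m³+l³) + 256·nml·(n²m + n²l + m²n + m²l + l²n + l²m) + 2304·n²m²l² − 1536·nml·(nm + nl + ml) + 2304·nml·(n+m+l) − 3936·nml + 81, the three double-factorial arguments are odd integers (possibly negative), and ‼ denotes the extended double factorial. -/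

import Mathlib

/-!
Differentiating `H_a H_b H_c H_d e^{-2x²}`, with `H_d' = 2d H_{d-1}` and
`4x H_d = 2 H_{d+1} + 4d H_{d-1}`, and integrating over `ℝ` gives the recursion
`I_{n,m,l,k+1} = n I_{n-1,m,l,k} + m I_{n,m-1,l,k} + l I_{n,m,l-1,k} - k I_{n,m,l,k-1}`.
Since the integrand is symmetric, the same recursion in the first slot with `k = 0`, started at
the Gaussian integral `I_{0,0,0,0} = 1`, gives `I_{n,m,l,0} = (n+m-l-1)‼ (n-m+l-1)‼ (-n+m+l-1)‼`
by induction on `n + m + l`. Induction on `k` then gives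
`I_{n,m,l,k} = (n+m-l-k-1)‼ (n-m+l-k-1)‼ (-n+m+l-k-1)‼ · P_k(n, m, l)`: the parity condition makes
all these arguments odd, so `(a + 2)‼ = (a + 2) · a‼` pulls a common factor of double factorials
out of every term of the recursion and leaves a polynomial recursion for `P_k`.
-/

open MeasureTheory Real

/-- Physicists' Hermite polynomials: `H 0 x = 1`, `H 1 x = 2x`,
`H (n+1) x = 2x * H n x - 2n * H (n-1) x`. -/
noncomputable def hermiteP : ℕ → ℝ → ℝ
  | 0, _ => 1
  | 1, x => 2 * x
  | n + 2, x => 2 * x * hermiteP (n + 1) x - 2 * ((n : ℝ) + 1) * hermiteP n x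

/-- Extended double factorial of an odd integer `a`:
`a‼ = 2^((a+1)/2) * Γ(a/2 + 1) / √π`. -/
noncomputable def ddfact (a : ℤ) : ℝ :=
  (2 : ℝ) ^ ((a + 1) / 2) * Real.Gamma ((a : ℝ) / 2 + 1) / Real.sqrt π

/-- `I n m l k = √(2/π) ∫ H_n(x) H_m(x) H_l(x) H_k(x) e^{-2x²} dx`. -/
noncomputable def I (n m l k : ℕ) : ℝ :=
  Real.sqrt (2 / π) *
    ∫ x : ℝ,
      hermiteP n x * hermiteP m x * hermiteP l x * hermiteP k x * Real.exp (-2 * x ^ 2)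

open Polynomial

lemma hermiteP_succ (n : ℕ) (x : ℝ) :
    hermiteP (n + 1) x = 2 * x * hermiteP n x - 2 * n * hermiteP (n - 1) x := by
  cases n with
  | zero => simp [hermiteP]
  | succ n => simp only [hermiteP]; push_cast; ring

lemma hasDerivAt_hermiteP : ∀ (n : ℕ) (x : ℝ),
    HasDerivAt (hermiteP n) (2 * n * hermiteP (n - 1) x) x
  | 0, x => by simpa [hermiteP] using hasDerivAt_const x (1 : ℝ)
  | 1, x => by simpa [hermiteP] using (hasDerivAt_id x).const_mul (2 : ℝ)
  | n + 2, x => by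
      refine ((((hasDerivAt_id' x).const_mul 2).mul (hasDerivAt_hermiteP (n + 1) x)).sub
        ((hasDerivAt_hermiteP n x).const_mul (2 * ((n : ℝ) + 1)))).congr_deriv ?_
      rw [show n + 2 - 1 = n + 1 by omega, Nat.add_sub_cancel, hermiteP_succ n x]
      push_cast
      ring

lemma exists_eval_eq_hermiteP : ∀ n : ℕ, ∃ p : ℝ[X], ∀ x, p.eval x = hermiteP n x
  | 0 => ⟨1, by simp [hermiteP]⟩
  | 1 => ⟨C 2 * X, by simp [hermiteP]⟩
  | n + 2 => by
      obtain ⟨p, hp⟩ := exists_eval_eq_hermiteP (n + 1)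
      obtain ⟨q, hq⟩ := exists_eval_eq_hermiteP n
      exact ⟨C 2 * X * p - C (2 * ((n : ℝ) + 1)) * q, fun x => by simp [hermiteP, hp, hq]⟩

lemma integrable_pow_mul_exp_neg_mul_sq {b : ℝ} (hb : 0 < b) (j : ℕ) :
    Integrable fun x : ℝ => x ^ j * exp (-b * x ^ 2) := by
  simpa [Real.rpow_natCast] using
    integrable_rpow_mul_exp_neg_mul_sq hb (s := j) (by linarith [j.cast_nonneg (α := ℝ)])

lemma Polynomial.integrable_eval_mul_exp_neg_mul_sq {b : ℝ} (hb : 0 < b) (p : ℝ[X]) :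
    Integrable fun x : ℝ => p.eval x * exp (-b * x ^ 2) := by
  induction p using Polynomial.induction_on' with
  | add p q hp hq => simpa only [eval_add, add_mul, Pi.add_def] using hp.add hq
  | monomial j a =>
      simpa only [eval_monomial, mul_assoc] using
        (integrable_pow_mul_exp_neg_mul_sq hb j).const_mul a

noncomputable def hermiteProd (a b c d : ℕ) (x : ℝ) : ℝ :=
  hermiteP a x * hermiteP b x * hermiteP c x * hermiteP d x * exp (-2 * x ^ 2)

lemma I_eq_integral_hermiteProd (a b c d : ℕ) :
    I a b c d = √(2 / π) * ∫ x, hermiteProd a b c d x := rfl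

lemma integrable_hermiteProd (a b c d : ℕ) : Integrable (hermiteProd a b c d) := by
  obtain ⟨pa, ha⟩ := exists_eval_eq_hermiteP a
  obtain ⟨pb, hb⟩ := exists_eval_eq_hermiteP b
  obtain ⟨pc, hc⟩ := exists_eval_eq_hermiteP c
  obtain ⟨pd, hd⟩ := exists_eval_eq_hermiteP d
  convert (pa * pb * pc * pd).integrable_eval_mul_exp_neg_mul_sq two_pos using 2 with x
  simp [hermiteProd, ha, hb, hc, hd]

lemma hasDerivAt_hermiteProd (a b c d : ℕ) (x : ℝ) :
    HasDerivAt (hermiteProd a b c d)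
      (2 * (a * hermiteProd (a - 1) b c d x + b * hermiteProd a (b - 1) c d x
        + c * hermiteProd a b (c - 1) d x - d * hermiteProd a b c (d - 1) x
        - hermiteProd a b c (d + 1) x)) x := by
  have hexp : HasDerivAt (fun y : ℝ => exp (-2 * y ^ 2))
      (exp (-2 * x ^ 2) * (-2 * (2 * x))) x := by
    simpa using ((hasDerivAt_pow 2 x).const_mul (-2 : ℝ)).exp
  refine (((((hasDerivAt_hermiteP a x).mul (hasDerivAt_hermiteP b x)).mul
    (hasDerivAt_hermiteP c x)).mul (hasDerivAt_hermiteP d x)).mul hexp).congr_deriv ?_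
  simp only [hermiteProd, Pi.mul_apply, hermiteP_succ d x]
  ring

lemma integral_hermiteProd_succ (a b c d : ℕ) :
    ∫ x, hermiteProd a b c (d + 1) x =
      a * (∫ x, hermiteProd (a - 1) b c d x) + b * (∫ x, hermiteProd a (b - 1) c d x)
        + c * (∫ x, hermiteProd a b (c - 1) d x) - d * ∫ x, hermiteProd a b c (d - 1) x := by
  have hi := integrable_hermiteProd
  have h := integral_eq_zero_of_hasDerivAt_of_integrable (hasDerivAt_hermiteProd a b c d)
    (by fun_prop) (hi a b c d)
  rw [integral_const_mul, integral_sub, integral_sub, integral_add, integral_add] at h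
  · simp only [integral_const_mul] at h
    linarith
  all_goals fun_prop

lemma I_succ (a b c d : ℕ) :
    I a b c (d + 1) = a * I (a - 1) b c d + b * I a (b - 1) c d + c * I a b (c - 1) d
      - d * I a b c (d - 1) := by
  simp only [I_eq_integral_hermiteProd, integral_hermiteProd_succ]
  ring

lemma I_comm12 (a b c d : ℕ) : I a b c d = I b a c d := by
  unfold I; congr 2 with x; ring

lemma I_comm13 (a b c d : ℕ) : I a b c d = I c b a d := by
  unfold I; congr 2 with x; ring

lemma I_comm14 (a b c d : ℕ) : I a b c d = I d b c a := by
  unfold I; congr 2 with x; ring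

lemma I_succ_zero (a b c : ℕ) :
    I (a + 1) b c 0 = b * I a (b - 1) c 0 + c * I a b (c - 1) 0 - a * I (a - 1) b c 0 := by
  rw [I_comm14, I_succ, I_comm14 0 (b - 1), I_comm14 0 b (c - 1), I_comm14 0 b c (a - 1)]
  simp

lemma I_zero_zero_zero_zero : I 0 0 0 0 = 1 := by
  simp only [I, hermiteP, one_mul]
  rw [integral_gaussian, ← Real.sqrt_mul (by positivity), show 2 / π * (π / 2) = 1 by field_simp,
    sqrt_one]

lemma ddfact_add_two {a : ℤ} (h : a ≠ -2) : ddfact (a + 2) = (a + 2) * ddfact a := by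
  have hΓ : (a : ℝ) / 2 + 1 ≠ 0 := by
    intro h'
    exact h (by exact_mod_cast (show (a : ℝ) = -2 by linarith))
  have hexp : (a + 2 + 1) / 2 = (a + 1) / 2 + 1 := by omega
  simp only [ddfact, hexp, zpow_add_one₀ (by norm_num : (2 : ℝ) ≠ 0), Int.cast_add, Int.cast_ofNat,
    show ((a : ℝ) + 2) / 2 + 1 = (a / 2 + 1) + 1 by ring, Real.Gamma_add_one hΓ]
  ring

lemma ddfact_neg_one : ddfact (-1) = 1 := by
  norm_num [ddfact, Real.Gamma_one_half_eq, (Real.sqrt_pos.mpr Real.pi_pos).ne']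

noncomputable def ddfactTriple (j n m l : ℤ) : ℝ :=
  ddfact (n + m - l - j) * ddfact (n - m + l - j) * ddfact (-n + m + l - j)

section ddfactTriple

variable (j n m l : ℤ)

lemma ddfactTriple_comm12 : ddfactTriple j n m l = ddfactTriple j m n l := by
  unfold ddfactTriple
  rw [add_comm (m : ℤ) n, show m - n + l - j = -n + m + l - j by ring,
    show -m + n + l - j = n - m + l - j by ring]
  ring

lemma ddfactTriple_comm13 : ddfactTriple j n m l = ddfactTriple j l m n := by
  unfold ddfactTriple
  rw [show l + m - n - j = -n + m + l - j by ring, show l - m + n - j = n - m + l - j by ring,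
    show -l + m + n - j = n + m - l - j by ring]
  ring

lemma ddfactTriple_sub_one_left (h : -n + m + l - j ≠ -1) :
    ddfactTriple j (n - 1) m l = (-n + m + l - j + 1) * ddfactTriple (j + 1) n m l := by
  unfold ddfactTriple
  rw [show -(n - 1) + m + l - j = -n + m + l - (j + 1) + 2 by ring, ddfact_add_two (by omega),
    show n - 1 + m - l - j = n + m - l - (j + 1) by ring,
    show n - 1 - m + l - j = n - m + l - (j + 1) by ring]
  push_cast
  ring

lemma ddfactTriple_sub_one_mid (h : n - m + l - j ≠ -1) :
    ddfactTriple j n (m - 1) l = (n - m + l - j + 1) * ddfactTriple (j + 1) n m l := by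
  unfold ddfactTriple
  rw [show n - (m - 1) + l - j = n - m + l - (j + 1) + 2 by ring, ddfact_add_two (by omega),
    show n + (m - 1) - l - j = n + m - l - (j + 1) by ring,
    show -n + (m - 1) + l - j = -n + m + l - (j + 1) by ring]
  push_cast
  ring

lemma ddfactTriple_sub_one_right (h : n + m - l - j ≠ -1) :
    ddfactTriple j n m (l - 1) = (n + m - l - j + 1) * ddfactTriple (j + 1) n m l := by
  unfold ddfactTriple
  rw [show n + m - (l - 1) - j = n + m - l - (j + 1) + 2 by ring, ddfact_add_two (by omega),
    show n - m + (l - 1) - j = n - m + l - (j + 1) by ring,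
    show -n + m + (l - 1) - j = -n + m + l - (j + 1) by ring]
  push_cast
  ring

lemma ddfactTriple_eq_mul_ddfactTriple_add_two (hA : n + m - l ≠ j) (hB : n - m + l ≠ j)
    (hC : -n + m + l ≠ j) :
    ddfactTriple j n m l = (n + m - l - j) * (n - m + l - j) * (-n + m + l - j) *
      ddfactTriple (j + 2) n m l := by
  unfold ddfactTriple
  rw [show n + m - l - j = n + m - l - (j + 2) + 2 by ring,
    show n - m + l - j = n - m + l - (j + 2) + 2 by ring,
    show -n + m + l - j = -n + m + l - (j + 2) + 2 by ring,
    ddfact_add_two (by omega), ddfact_add_two (by omega), ddfact_add_two (by omega)]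
  push_cast
  ring

end ddfactTriple

lemma ddfactTriple_one_eq (n m l : ℤ) (h : Even (n + m + l)) :
    ddfactTriple 1 n m l = m * ddfactTriple 1 (n - 1) (m - 1) l
      + l * ddfactTriple 1 (n - 1) m (l - 1) - (n - 1) * ddfactTriple 1 (n - 2) m l := by
  obtain ⟨t, ht⟩ := h
  rw [ddfactTriple_sub_one_left 1 n (m - 1) l (by omega),
    ddfactTriple_sub_one_mid (1 + 1) n m l (by omega),
    ddfactTriple_sub_one_left 1 n m (l - 1) (by omega),
    ddfactTriple_sub_one_right (1 + 1) n m l (by omega), show n - 2 = n - 1 - 1 by ring,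
    ddfactTriple_sub_one_left 1 (n - 1) m l (by omega),
    ddfactTriple_sub_one_left (1 + 1) n m l (by omega),
    ddfactTriple_eq_mul_ddfactTriple_add_two 1 n m l (by omega) (by omega) (by omega)]
  norm_num
  ring

-- The factor `n` kills the truncated `n - 1` at `n = 0`.
lemma natCast_mul_pred_eq {F : ℕ → ℝ} {G : ℤ → ℝ} (n : ℕ) (h : ∀ j, j + 1 = n → F j = G j) :
    (n : ℝ) * F (n - 1) = n * G (n - 1) := by
  cases n with
  | zero => simp
  | succ j => simp [h j rfl]

lemma I_zero_eq_ddfactTriple (n m l : ℕ) (h : Even (n + m + l)) :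
    I n m l 0 = ddfactTriple 1 n m l := by
  rw [Nat.even_iff] at h
  induction hs : n + m + l using Nat.strong_induction_on generalizing n m l with
  | _ s ih =>
  have step : ∀ a b c, a + 1 + b + c = s → I (a + 1) b c 0 = ddfactTriple 1 (a + 1 : ℕ) b c := by
    intro a b c habc
    have hb := natCast_mul_pred_eq b (F := fun j => I a j c 0)
      (G := fun j => ddfactTriple 1 a j c) (fun j hj => ih _ (by omega) a j c (by omega) rfl)
    have hc := natCast_mul_pred_eq c (F := fun j => I a b j 0)
      (G := fun j => ddfactTriple 1 a b j) (fun j hj => ih _ (by omega) a b j (by omega) rfl)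
    have ha := natCast_mul_pred_eq a (F := fun j => I j b c 0)
      (G := fun j => ddfactTriple 1 j b c) (fun j hj => ih _ (by omega) j b c (by omega) rfl)
    rw [I_succ_zero, hb, hc, ha, Nat.cast_succ,
      ddfactTriple_one_eq (a + 1) b c (Int.even_iff.mpr (by omega)), add_sub_cancel_right,
      show (a : ℤ) + 1 - 2 = a - 1 by ring]
    push_cast
    ring
  rcases n with _ | a
  · rcases m with _ | b
    · rcases l with _ | c
      · simpa [ddfactTriple, ddfact_neg_one] using I_zero_zero_zero_zero
      · rw [I_comm13, ddfactTriple_comm13, step c 0 0 (by omega)]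
    · rw [I_comm12, ddfactTriple_comm12, step b 0 l (by omega)]
  · exact step a m l hs

-- The polynomial `P_k` of `I n m l k = ddfactTriple (k + 1) n m l * P_k n m l`.
noncomputable def hermiteCoeff : ℕ → ℝ → ℝ → ℝ → ℝ
  | 0, _, _, _ => 1
  | k + 1, n, m, l =>
      n * (-n + m + l - k) * hermiteCoeff k (n - 1) m l
        + m * (n - m + l - k) * hermiteCoeff k n (m - 1) l
        + l * (n + m - l - k) * hermiteCoeff k n m (l - 1)
        - k * (n + m - l - k) * (n - m + l - k) * (-n + m + l - k) * hermiteCoeff (k - 1) n m l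

theorem I_eq_ddfactTriple_mul_hermiteCoeff (k n m l : ℕ) (h : Even (n + m + l + k)) :
    I n m l k = ddfactTriple (k + 1) n m l * hermiteCoeff k n m l := by
  rw [Nat.even_iff] at h
  induction k using Nat.strong_induction_on generalizing n m l with
  | _ k ih =>
  cases k with
  | zero => simpa [hermiteCoeff] using I_zero_eq_ddfactTriple n m l (Nat.even_iff.mpr h)
  | succ k =>
    have IH : ∀ n' m' l' : ℕ, (n' + m' + l' + k) % 2 = 0 →
        I n' m' l' k = ddfactTriple (k + 1) n' m' l' * hermiteCoeff k n' m' l' :=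
      fun n' m' l' h' => ih k (by omega) n' m' l' h'
    have hn := natCast_mul_pred_eq n (F := fun j => I j m l k)
      (G := fun j => ddfactTriple (k + 1) j m l * hermiteCoeff k j m l)
      (fun j hj => by simpa using IH j m l (by omega))
    have hm := natCast_mul_pred_eq m (F := fun j => I n j l k)
      (G := fun j => ddfactTriple (k + 1) n j l * hermiteCoeff k n j l)
      (fun j hj => by simpa using IH n j l (by omega))
    have hl := natCast_mul_pred_eq l (F := fun j => I n m j k)
      (G := fun j => ddfactTriple (k + 1) n m j * hermiteCoeff k n m j)
      (fun j hj => by simpa using IH n m j (by omega))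
    have hk : (k : ℝ) * I n m l (k - 1) =
        k * (ddfactTriple k n m l * hermiteCoeff (k - 1) n m l) := by
      cases k with
      | zero => simp
      | succ k => simp [ih k (by omega) n m l (by omega)]
    rw [I_succ, hn, hm, hl, hk,
      ddfactTriple_sub_one_left (k + 1) n m l (by omega),
      ddfactTriple_sub_one_mid (k + 1) n m l (by omega),
      ddfactTriple_sub_one_right (k + 1) n m l (by omega),
      ddfactTriple_eq_mul_ddfactTriple_add_two k n m l (by omega) (by omega) (by omega),
      show (k : ℤ) + 2 = k + 1 + 1 by ring]
    simp only [hermiteCoeff]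
    push_cast
    ring

theorem I4_four_eq (n m l : ℕ) (h : Even (n + m + l))
    (P₁ P₄ : ℝ)
    (hP₁ : P₁ = (n : ℝ) ^ 2 + (m : ℝ) ^ 2 + (l : ℝ) ^ 2 - 2 * n * m - 2 * n * l - 2 * m * l)
    (hP₄ : P₄ = P₁ ^ 4 - 20 * P₁ ^ 3 + (-96 * n * m * l + 118) * P₁ ^ 2 +
        (960 * n * m * l - 180) * P₁ -
        256 * n * m * l * ((n : ℝ) ^ 3 + (m : ℝ) ^ 3 + (l : ℝ) ^ 3) +
        256 * n * m * l *
          ((n : ℝ) ^ 2 * m + (n : ℝ) ^ 2 * l + (m : ℝ) ^ 2 * n + (m : ℝ) ^ 2 * l +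
            (l : ℝ) ^ 2 * n + (l : ℝ) ^ 2 * m) +
        2304 * (n : ℝ) ^ 2 * (m : ℝ) ^ 2 * (l : ℝ) ^ 2 -
        1536 * n * m * l * ((n : ℝ) * m + (n : ℝ) * l + (m : ℝ) * l) +
        2304 * n * m * l * ((n : ℝ) + m + l) - 3936 * n * m * l + 81) :
    I n m l 4 =
      ddfact ((n : ℤ) + m - l - 5) * ddfact ((n : ℤ) - m + l - 5) *
        ddfact (-(n : ℤ) + m + l - 5) * P₄ := by
  rw [I_eq_ddfactTriple_mul_hermiteCoeff 4 n m l (h.add (by decide))]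
  have hcoeff : hermiteCoeff 4 n m l = P₄ := by
    subst hP₄ hP₁
    norm_num [hermiteCoeff]
    ring
  rw [hcoeff]
  norm_num [ddfactTriple]
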